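/- (Gap property of the Shapley value for the cardinality-repair measure.) Let D be a finite set and f ∈ D. If no g ∈ D\{f} satisfies C(f,g), then Shapley(D, I_R, f) = 0. If some g ∈ D\{f} satisfies C(f,g), then Shapley(D, I_R, f) ≥ 1/(|D| · (|D|−1)). In particular, Shapley(D, I_R, f) is either zero or at least 1/(|D|·(|D|−1)). -/
import Mathlib


open scoped BigOperators Classical

variable {α : Type*} [DecidableEq α]

/-- The Shapley value of `f` in the cooperative game `v` over the set of players `D`. -/
noncomputable def Shapley (D : Finset α) (v : Finset α → ℝ) (f : α) : ℝ :=
  ∑ B ∈ (D \ {f}).powerset,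
    ((B.card.factorial * (D.card - B.card - 1).factorial : ℕ) : ℝ) / (D.card.factorial : ℝ) *
      (v (B ∪ {f}) - v B)

/-- A finite set `E` is consistent if it contains no two distinct conflicting elements. -/
def Consistent (C : α → α → Prop) (E : Finset α) : Prop :=
  ∀ g ∈ E, ∀ h ∈ E, g ≠ h → ¬ C g h

/-- The cost of a cardinality repair of `E`: the minimal number of elements whose
removal from `E` leaves a consistent set. -/
noncomputable def IR (C : α → α → Prop) (E : Finset α) : ℕ :=
  E.card - ((E.powerset.filter (Consistent C)).sup Finset.card)

noncomputable def Mx (C : α → α → Prop) (E : Finset α) : ℕ :=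
  (E.powerset.filter (Consistent C)).sup Finset.card

lemma IR_eq (C : α → α → Prop) (E : Finset α) : IR C E = E.card - Mx C E := rfl

lemma consistent_mono {C : α → α → Prop} {S T : Finset α} (h : S ⊆ T)
    (hT : Consistent C T) : Consistent C S :=
  fun g hg h' hh hne => hT g (h hg) h' (h hh) hne

lemma le_Mx {C : α → α → Prop} {S E : Finset α} (hS : S ⊆ E) (hc : Consistent C S) :
    S.card ≤ Mx C E :=
  Finset.le_sup (Finset.mem_filter.mpr ⟨Finset.mem_powerset.mpr hS, hc⟩)

lemma Mx_le_card (C : α → α → Prop) (E : Finset α) : Mx C E ≤ E.card := by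
  apply Finset.sup_le
  intro S hS
  simp only [Finset.mem_filter, Finset.mem_powerset] at hS
  exact Finset.card_le_card hS.1

lemma exists_Mx (C : α → α → Prop) (E : Finset α) :
    ∃ S ⊆ E, Consistent C S ∧ S.card = Mx C E := by
  have hne : (E.powerset.filter (Consistent C)).Nonempty :=
    ⟨∅, Finset.mem_filter.mpr ⟨Finset.mem_powerset.mpr (Finset.empty_subset E),
      fun g hg => absurd hg (Finset.notMem_empty g)⟩⟩
  obtain ⟨S, hS, hcard⟩ := Finset.exists_mem_eq_sup _ hne Finset.card
  simp only [Finset.mem_filter, Finset.mem_powerset] at hS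
  exact ⟨S, hS.1, hS.2, hcard.symm⟩

lemma Mx_insert_le {C : α → α → Prop} {f : α} {B : Finset α} :
    Mx C (insert f B) ≤ Mx C B + 1 := by
  apply Finset.sup_le
  intro S hS
  simp only [Finset.mem_filter, Finset.mem_powerset] at hS
  have h1 : S.erase f ⊆ B := by
    intro x hx
    have := hS.1 (Finset.mem_of_mem_erase hx)
    rcases Finset.mem_insert.mp this with h | h
    · exact absurd h (Finset.ne_of_mem_erase hx)
    · exact h
  have h2 : S.erase f ∈ B.powerset.filter (Consistent C) :=
    Finset.mem_filter.mpr ⟨Finset.mem_powerset.mpr h1,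
      consistent_mono (Finset.erase_subset f S) hS.2⟩
  have h3 : S.card - 1 ≤ (S.erase f).card := Finset.pred_card_le_card_erase
  have h4 : (S.erase f).card ≤ Mx C B := Finset.le_sup h2
  omega

lemma IR_mono_insert (C : α → α → Prop) (f : α) (B : Finset α) (hfB : f ∉ B) :
    IR C B ≤ IR C (insert f B) := by
  rw [IR_eq, IR_eq, Finset.card_insert_of_notMem hfB]
  calc B.card - Mx C B = (B.card + 1) - (Mx C B + 1) := by omega
    _ ≤ (B.card + 1) - Mx C (insert f B) := Nat.sub_le_sub_left Mx_insert_le _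

lemma IR_insert_of_noconflict {C : α → α → Prop} (hsymm : Symmetric C) {f : α}
    {B : Finset α} (hfB : f ∉ B) (hB : ∀ g ∈ B, ¬ C f g) :
    IR C (insert f B) = IR C B := by
  obtain ⟨S, hSB, hSc, hScard⟩ := exists_Mx C B
  have hfS : f ∉ S := fun h => hfB (hSB h)
  have hcons : Consistent C (insert f S) := by
    intro a ha b hb hab
    rcases Finset.mem_insert.mp ha with haf | haS
    · rcases Finset.mem_insert.mp hb with hbf | hbS
      · exact absurd (haf.trans hbf.symm) hab
      · rw [haf]; exact hB b (hSB hbS)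
    · rcases Finset.mem_insert.mp hb with hbf | hbS
      · exact fun hc => hB a (hSB haS) (hsymm (hbf ▸ hc))
      · exact hSc a haS b hbS hab
  have hle : Mx C B + 1 ≤ Mx C (insert f B) := by
    have := le_Mx (C := C) (Finset.insert_subset_insert f hSB) hcons
    rwa [Finset.card_insert_of_notMem hfS, hScard] at this
  have heq : Mx C (insert f B) = Mx C B + 1 := le_antisymm Mx_insert_le hle
  rw [IR_eq, IR_eq, Finset.card_insert_of_notMem hfB, heq]
  omega

lemma IR_consistent {C : α → α → Prop} {E : Finset α} (hE : Consistent C E) :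
    IR C E = 0 := by
  have h1 : E.card ≤ Mx C E := le_Mx (le_refl E) hE
  rw [IR_eq]
  omega

lemma IR_pair {C : α → α → Prop} {f g : α} (hne : f ≠ g) (hC : C f g) :
    IR C ({g} ∪ {f}) = 1 := by
  have hset : ({g} ∪ {f} : Finset α) = insert f {g} := by
    ext x; simp [or_comm]
  have hcard : ({g} ∪ {f} : Finset α).card = 2 := by
    rw [hset, Finset.card_insert_of_notMem (by simpa using hne)]
    simp
  have hub : Mx C ({g} ∪ {f}) ≤ 1 := by
    apply Finset.sup_le
    intro S hS
    simp only [Finset.mem_filter, Finset.mem_powerset] at hS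
    by_contra h
    have h2 : 2 ≤ S.card := by omega
    have hSeq : S = {g} ∪ {f} := Finset.eq_of_subset_of_card_le hS.1 (by omega)
    have hfS : f ∈ S := by rw [hSeq]; simp
    have hgS : g ∈ S := by rw [hSeq]; simp
    exact hS.2 f hfS g hgS hne hC
  have hlb : 1 ≤ Mx C ({g} ∪ {f}) := by
    have : ({f} : Finset α).card ≤ Mx C ({g} ∪ {f}) := by
      apply le_Mx (by simp)
      intro a ha b hb hab
      simp only [Finset.mem_singleton] at ha hb
      exact absurd (ha.trans hb.symm) hab
    simpa using this
  rw [IR_eq, hcard]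
  omega

/-- Gap property of the Shapley value for the cardinality-repair measure: it is `0`
when no element of `D \ {f}` conflicts with `f`, and otherwise at least
`1/(|D|·(|D|−1))`. -/
theorem shapley_IR_gap (C : α → α → Prop) (hsymm : Symmetric C)
    (D : Finset α) (f : α) (hf : f ∈ D) :
    ((∀ g ∈ D \ {f}, ¬ C f g) → Shapley D (fun E => (IR C E : ℝ)) f = 0) ∧
      ((∃ g ∈ D \ {f}, C f g) →
        1 / ((D.card : ℝ) * ((D.card : ℝ) - 1)) ≤ Shapley D (fun E => (IR C E : ℝ)) f) := by
  constructor
  · intro hno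
    unfold Shapley
    apply Finset.sum_eq_zero
    intro B hB
    rw [Finset.mem_powerset] at hB
    have hfB : f ∉ B := fun h => by simpa using (hB h)
    have hBg : ∀ g ∈ B, ¬ C f g := fun g hg => hno g (hB hg)
    have hu : B ∪ {f} = insert f B := by rw [Finset.union_comm]; rfl
    simp only [hu, IR_insert_of_noconflict hsymm hfB hBg, sub_self, mul_zero]
  · rintro ⟨g, hg, hCfg⟩
    have hgD : g ∈ D := (Finset.mem_sdiff.mp hg).1
    have hne : f ≠ g := fun h => by simp [h] at hg
    have h2 : 2 ≤ D.card := Finset.one_lt_card.mpr ⟨f, hf, g, hgD, hne⟩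
    obtain ⟨k, hk⟩ : ∃ k, D.card = k + 2 := ⟨D.card - 2, by omega⟩
    unfold Shapley
    have hterm : ∀ B ∈ (D \ {f}).powerset,
        0 ≤ ((B.card.factorial * (D.card - B.card - 1).factorial : ℕ) : ℝ) /
          (D.card.factorial : ℝ) * ((IR C (B ∪ {f}) : ℝ) - (IR C B : ℝ)) := by
      intro B hB
      rw [Finset.mem_powerset] at hB
      have hfB : f ∉ B := fun h => by simpa using (hB h)
      have hu : B ∪ {f} = insert f B := by rw [Finset.union_comm]; rfl
      apply mul_nonneg
      · positivity
      · rw [hu, sub_nonneg]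
        exact_mod_cast IR_mono_insert C f B hfB
    have hmem : ({g} : Finset α) ∈ (D \ {f}).powerset := by
      rw [Finset.mem_powerset]; simpa using hg
    have hsingle := Finset.single_le_sum hterm hmem
    refine le_trans (le_of_eq ?_) hsingle
    have hIRu : (IR C (({g} : Finset α) ∪ {f}) : ℝ) = 1 := by
      exact_mod_cast congrArg Nat.cast (IR_pair hne hCfg)
    have hIRg : (IR C ({g} : Finset α) : ℝ) = 0 := by
      have : IR C ({g} : Finset α) = 0 := IR_consistent (by
        intro a ha b hb hab
        simp only [Finset.mem_singleton] at ha hb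
        exact absurd (ha.trans hb.symm) hab)
      exact_mod_cast this
    rw [hIRu, hIRg]
    have hcard1 : ({g} : Finset α).card = 1 := Finset.card_singleton g
    rw [hcard1, hk]
    have : (k + 2) - 1 - 1 = k := by omega
    rw [this]
    simp only [Nat.factorial_one, one_mul]
    have hfac : ((k + 2).factorial : ℝ) = ((k:ℝ) + 2) * (((k:ℝ) + 1) * (k.factorial:ℝ)) := by
      rw [show k + 2 = (k + 1) + 1 from rfl, Nat.factorial_succ, Nat.factorial_succ]
      push_cast; ring
    have h1 : ((k:ℝ)+2) ≠ 0 := by positivity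
    have h2 : ((k:ℝ)+1) ≠ 0 := by positivity
    have h3 : ((k.factorial:ℝ)) ≠ 0 := by positivity
    push_cast
    rw [hfac, show ((k:ℝ)+2)-1 = (k:ℝ)+1 by ring]
    field_simp
    ring
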